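/- arXiv:2508.13443 — 5 statements merged into one kernel-verified Lean document; each statement's English description precedes it below -/
import Mathlib

section
/- Let {G_α : α < τ} be a family of nontrivial discrete groups, let P = ∏_{α<τ} G_α carry the Tychonoff product topology, and let G be the σ-product, i.e., the subgroup of all elements g ∈ P whose support {α : g(α) ≠ e_α} is finite, with the subspace topology. Then every subgroup H of G has a generating suitable set: there is a discrete subset S of H such that S ∪ {e} is closed in H and the subgroup generated by S equals H. -/
namespace SigmaProdAux

variable {τ : Type*} [LinearOrder τ] {G : τ → Type*} [∀ α, Group (G α)]

/-- Max of the support, `⊥` for the identity (or infinite support). -/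
noncomputable def lamS (s : Set τ) : WithBot τ :=
  @dite _ s.Finite (Classical.dec _) (fun h => h.toFinset.max) (fun _ => ⊥)

noncomputable def lamW (x : ∀ α, G α) : WithBot τ :=
  lamS {α | x α ≠ 1}

theorem lamW_def {x : ∀ α, G α} (h : ({α | x α ≠ 1}).Finite) :
    lamW x = h.toFinset.max := by
  unfold lamW lamS
  rw [dif_pos h]

theorem le_lamW {x : ∀ α, G α} (h : ({α | x α ≠ 1}).Finite) {β : τ} (hβ : x β ≠ 1) :
    (β : WithBot τ) ≤ lamW x := by
  rw [lamW_def h]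
  exact Finset.le_max (by simpa using hβ)

theorem exists_lamW_eq {x : ∀ α, G α} (h : ({α | x α ≠ 1}).Finite) (hx : x ≠ 1) :
    ∃ β : τ, lamW x = β ∧ x β ≠ 1 := by
  have hne : h.toFinset.Nonempty := by
    rw [Set.Finite.toFinset_nonempty]
    rw [Set.nonempty_def]
    by_contra hc
    push_neg at hc
    apply hx
    funext β
    have := hc β
    simpa using this
  refine ⟨h.toFinset.max' hne, ?_, ?_⟩
  · rw [lamW_def h, Finset.coe_max']
  · have := h.toFinset.max'_mem hne
    simpa using this

theorem lamW_le {x : ∀ α, G α} (h : ({α | x α ≠ 1}).Finite) {a : WithBot τ}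
    (ha : ∀ β : τ, x β ≠ 1 → (β : WithBot τ) ≤ a) : lamW x ≤ a := by
  by_cases hx : x = 1
  · subst hx
    rw [lamW_def h]
    by_contra hc
    have hne : h.toFinset.Nonempty := by
      by_contra h2
      rw [Finset.not_nonempty_iff_eq_empty] at h2
      rw [h2] at hc
      simp at hc
    have := h.toFinset.max'_mem hne
    simp at this
  · obtain ⟨β, hβ, hβ1⟩ := exists_lamW_eq h hx
    rw [hβ]; exact ha β hβ1

theorem lamW_lt {x : ∀ α, G α} (h : ({α | x α ≠ 1}).Finite) {a : WithBot τ}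
    (hbot : ⊥ < a) (ha : ∀ β : τ, x β ≠ 1 → (β : WithBot τ) < a) : lamW x < a := by
  by_cases hx : x = 1
  · subst hx
    have : lamW (1 : ∀ α, G α) ≤ ⊥ := lamW_le h (by intro β hβ; simp at hβ)
    exact lt_of_le_of_lt this hbot
  · obtain ⟨β, hβ, hβ1⟩ := exists_lamW_eq h hx
    rw [hβ]; exact ha β hβ1

theorem lamW_ne_bot {x : ∀ α, G α} (h : ({α | x α ≠ 1}).Finite) (hx : x ≠ 1) :
    ⊥ < lamW x := by
  obtain ⟨β, hβ, _⟩ := exists_lamW_eq h hx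
  rw [hβ]; exact WithBot.bot_lt_coe β

theorem lamW_inv {x : ∀ α, G α} : lamW x⁻¹ = lamW x := by
  have hs : {α | x⁻¹ α ≠ 1} = {α | x α ≠ 1} := by
    ext β; simp [Pi.inv_apply, inv_eq_one]
  unfold lamW
  rw [hs]


variable (H : Subgroup (∀ α, G α))

/-- The coset `x · H_{< lamW x}` of elements of `H` agreeing with `x` from its top
coordinate onward. -/
def C (x : ∀ α, G α) : Set (∀ α, G α) :=
  {g | g ∈ H ∧ lamW (x⁻¹ * g) < lamW x}

variable (hH : ∀ h ∈ H, {α | h α ≠ 1}.Finite)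
include hH

theorem self_mem_C {x : ∀ α, G α} (hx : x ∈ H) (hx1 : x ≠ 1) : x ∈ C H x := by
  refine ⟨hx, ?_⟩
  rw [inv_mul_cancel]
  have h1 : lamW (1 : ∀ α, G α) ≤ ⊥ :=
    lamW_le (by simp) (by intro β hβ; simp at hβ)
  exact lt_of_le_of_lt h1 (lamW_ne_bot (hH x hx) hx1)

omit hH in
theorem one_notMem_C {x : ∀ α, G α} : (1 : ∀ α, G α) ∉ C H x := by
  rintro ⟨-, hlt⟩
  rw [mul_one, lamW_inv] at hlt
  exact lt_irrefl _ hlt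

omit hH in
theorem mem_H_of_mem_C {x g : ∀ α, G α} (hg : g ∈ C H x) : g ∈ H := hg.1

omit hH in
/-- Multiplication bound: lamW (x*y) < a if both are. -/
theorem lamW_mul_lt {x y : ∀ α, G α} (hx : {α | x α ≠ 1}.Finite)
    (hy : {α | y α ≠ 1}.Finite) {a : WithBot τ}
    (h1 : lamW x < a) (h2 : lamW y < a) : lamW (x * y) < a := by
  have hfin : {α | (x * y) α ≠ 1}.Finite := by
    apply (hx.union hy).subset
    intro β hβ
    simp only [Set.mem_setOf_eq, Pi.mul_apply] at hβ
    by_contra hc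
    simp only [Set.mem_union, Set.mem_setOf_eq, not_or, not_not] at hc
    rw [hc.1, hc.2, one_mul] at hβ
    exact hβ rfl
  refine lamW_lt hfin (lt_of_le_of_lt bot_le h1) ?_
  intro β hβ
  simp only [Pi.mul_apply] at hβ
  by_cases hxb : x β = 1
  · have hyb : y β ≠ 1 := by
      intro hc; rw [hxb, hc, one_mul] at hβ; exact hβ rfl
    exact lt_of_le_of_lt (le_lamW hy hyb) h2
  · exact lt_of_le_of_lt (le_lamW hx hxb) h1

theorem lamW_eq_of_mem_C {x y : ∀ α, G α} (hx : x ∈ H) (hx1 : x ≠ 1)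
    (hy : y ∈ C H x) : lamW y = lamW x := by
  obtain ⟨hyH, hlt⟩ := hy
  have hkH : x⁻¹ * y ∈ H := H.mul_mem (H.inv_mem hx) hyH
  have hkfin := hH _ hkH
  have hxfin := hH x hx
  have hyfin := hH y hyH
  obtain ⟨β₀, hβ₀, hxβ₀⟩ := exists_lamW_eq hxfin hx1
  have hkβ₀ : (x⁻¹ * y) β₀ = 1 := by
    by_contra hc
    have := le_lamW hkfin hc
    rw [hβ₀] at hlt
    exact absurd (lt_of_le_of_lt this hlt) (lt_irrefl _)
  have hyβ₀ : y β₀ = x β₀ := by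
    have : (x β₀) * ((x⁻¹ * y) β₀) = y β₀ := by
      simp [Pi.mul_apply, Pi.inv_apply, mul_assoc]
    rw [hkβ₀, mul_one] at this
    exact this.symm
  apply le_antisymm
  · refine lamW_le hyfin ?_
    intro β hβ
    have : (x β) * ((x⁻¹ * y) β) = y β := by
      simp [Pi.mul_apply, Pi.inv_apply, mul_assoc]
    by_cases hxb : x β = 1
    · have hkb : (x⁻¹ * y) β ≠ 1 := by
        intro hc
        rw [hxb, hc, one_mul] at this
        exact hβ this.symm
      exact le_of_lt (lt_of_lt_of_le (lt_of_le_of_lt (le_lamW hkfin hkb) hlt) le_rfl)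
    · exact le_lamW hxfin hxb
  · rw [hβ₀]
    refine le_lamW hyfin ?_
    rw [hyβ₀]; exact hxβ₀

theorem C_eq_of_mem {x y : ∀ α, G α} (hx : x ∈ H) (hx1 : x ≠ 1)
    (hy : y ∈ C H x) : C H y = C H x := by
  have hlam := lamW_eq_of_mem_C H hH hx hx1 hy
  obtain ⟨hyH, hlt⟩ := hy
  have hy1 : y ≠ 1 := by
    rintro rfl; exact one_notMem_C H ⟨hyH, hlt⟩
  have hkH : x⁻¹ * y ∈ H := H.mul_mem (H.inv_mem hx) hyH
  have hkH' : y⁻¹ * x ∈ H := H.mul_mem (H.inv_mem hyH) hx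
  have hltyx : lamW (y⁻¹ * x) < lamW x := by
    have : y⁻¹ * x = (x⁻¹ * y)⁻¹ := by group
    rw [this, lamW_inv]; exact hlt
  ext g
  constructor
  · rintro ⟨hgH, hg⟩
    refine ⟨hgH, ?_⟩
    have : x⁻¹ * g = (x⁻¹ * y) * (y⁻¹ * g) := by group
    rw [this]
    refine lamW_mul_lt (hH _ hkH) (hH _ (H.mul_mem (H.inv_mem hyH) hgH)) hlt ?_
    rw [← hlam]; exact hg
  · rintro ⟨hgH, hg⟩
    refine ⟨hgH, ?_⟩
    have : y⁻¹ * g = (y⁻¹ * x) * (x⁻¹ * g) := by group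
    rw [this, hlam]
    exact lamW_mul_lt (hH _ hkH') (hH _ (H.mul_mem (H.inv_mem hx) hgH)) hltyx hg


theorem exists_min {x : ∀ α, G α} (hx : x ∈ H) (hx1 : x ≠ 1) :
    ∃ s, s ∈ C H x ∧ ∀ g ∈ C H x,
      {α | s α ≠ 1}.ncard ≤ {α | g α ≠ 1}.ncard := by
  set N : Set ℕ := {n | ∃ s ∈ C H x, {α | s α ≠ 1}.ncard = n} with hN
  have hNne : N.Nonempty := ⟨_, x, self_mem_C H hH hx hx1, rfl⟩
  obtain ⟨s, hsC, hscard⟩ := Nat.sInf_mem hNne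
  refine ⟨s, hsC, ?_⟩
  intro g hg
  rw [hscard]
  exact Nat.sInf_le ⟨g, hg, rfl⟩

end SigmaProdAux

namespace SigmaProdAux

variable {τ : Type*} [LinearOrder τ] {G : τ → Type*} [∀ α, Group (G α)]

/-- Pick a minimal-support element of `A` if one exists. -/
noncomputable def repC (A : Set (∀ α, G α)) : ∀ α, G α :=
  @dite _ (∃ s, s ∈ A ∧ ∀ g ∈ A, {α | s α ≠ 1}.ncard ≤ {α | g α ≠ 1}.ncard)
    (Classical.dec _) (fun h => h.choose) (fun _ => 1)

variable (H : Subgroup (∀ α, G α))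

/-- Minimal-support representative of the coset of `x`. -/
noncomputable def rep (x : ∀ α, G α) : ∀ α, G α := repC (C H x)

/-- The suitable set. -/
def SS : Set (∀ α, G α) := {s | s ∈ H ∧ s ≠ 1 ∧ rep H s = s}

variable (hH : ∀ h ∈ H, {α | h α ≠ 1}.Finite)
include hH

theorem rep_spec {x : ∀ α, G α} (hx : x ∈ H) (hx1 : x ≠ 1) :
    rep H x ∈ C H x ∧ ∀ g ∈ C H x,
      {α | rep H x α ≠ 1}.ncard ≤ {α | g α ≠ 1}.ncard := by
  have hex := exists_min H hH hx hx1
  unfold rep repC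
  rw [dif_pos hex]
  exact hex.choose_spec

omit hH in
theorem rep_congr {x y : ∀ α, G α} (h : C H x = C H y) : rep H x = rep H y := by
  unfold rep
  rw [h]

theorem rep_mem_SS {x : ∀ α, G α} (hx : x ∈ H) (hx1 : x ≠ 1) :
    rep H x ∈ SS H := by
  obtain ⟨hC, -⟩ := rep_spec H hH hx hx1
  have hCeq : C H (rep H x) = C H x := C_eq_of_mem H hH hx hx1 hC
  refine ⟨mem_H_of_mem_C H hC, ?_, ?_⟩
  · intro h1
    rw [h1] at hC
    exact one_notMem_C H hC
  · exact rep_congr H hCeq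

omit hH in
theorem SS_subset : SS H ⊆ (H : Set (∀ α, G α)) := fun s hs => hs.1

theorem closure_SS [WellFoundedLT τ] : Subgroup.closure (SS H) = H := by
  apply le_antisymm
  · rw [Subgroup.closure_le]
    exact SS_subset H
  · intro x hx
    have main : ∀ a : WithBot τ, ∀ y, y ∈ H → lamW y = a →
        y ∈ Subgroup.closure (SS H) := by
      intro a
      induction a using WellFoundedLT.induction with
      | ind a ih =>
        intro y hy hlam
        by_cases hy1 : y = 1
        · subst hy1; exact Subgroup.one_mem _
        · have hs := rep_mem_SS H hH hy hy1
          obtain ⟨hC, -⟩ := rep_spec H hH hy hy1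
          set s := rep H y with hsdef
          have hk : lamW (s⁻¹ * y) < a := by
            have h1 : s⁻¹ * y = (y⁻¹ * s)⁻¹ := by group
            rw [h1, lamW_inv, ← hlam]
            exact hC.2
          have hkH : s⁻¹ * y ∈ H := H.mul_mem (H.inv_mem hs.1) hy
          have hkcl := ih _ hk (s⁻¹ * y) hkH rfl
          have hscl : s ∈ Subgroup.closure (SS H) := Subgroup.subset_closure hs
          have : y = s * (s⁻¹ * y) := by group
          rw [this]
          exact Subgroup.mul_mem _ hscl hkcl
    exact main (lamW x) x hx rfl

/-- The key uniqueness lemma: any element of `SS` extending `x` equals `rep H x`. -/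
theorem eq_rep_of_extends {x s : ∀ α, G α} (hx : x ∈ H) (hx1 : x ≠ 1)
    (hs : s ∈ SS H) (hext : ∀ β, x β ≠ 1 → s β = x β) : s = rep H x := by
  obtain ⟨hsH, hs1, hrep⟩ := hs
  have hxfin := hH x hx
  have hsfin := hH s hsH
  obtain ⟨β₀, hβ₀, hxβ₀⟩ := exists_lamW_eq hxfin hx1
  have hsupp : {α | x α ≠ 1} ⊆ {α | s α ≠ 1} := by
    intro β hβ
    simp only [Set.mem_setOf_eq] at hβ ⊢
    rw [hext β hβ]; exact hβ
  have hxs : lamW x ≤ lamW s := by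
    rw [hβ₀]
    exact le_lamW hsfin (hsupp hxβ₀)
  rcases lt_or_eq_of_le hxs with hlt | heq
  · -- impossible: s * x⁻¹ would be a smaller element of the coset of s
    exfalso
    have htH : s * x⁻¹ ∈ H := H.mul_mem hsH (H.inv_mem hx)
    have htC : s * x⁻¹ ∈ C H s := by
      refine ⟨htH, ?_⟩
      have h1 : s⁻¹ * (s * x⁻¹) = x⁻¹ := by group
      rw [h1, lamW_inv]
      exact hlt
    have hsuppt : {α | (s * x⁻¹) α ≠ 1} = {α | s α ≠ 1} \ {α | x α ≠ 1} := by
      ext β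
      simp only [Set.mem_diff, Set.mem_setOf_eq, Pi.mul_apply, Pi.inv_apply]
      constructor
      · intro h
        by_cases hxb : x β = 1
        · rw [hxb, inv_one, mul_one] at h
          exact ⟨h, fun h2 => h2 hxb⟩
        · rw [hext β hxb, mul_inv_cancel] at h
          exact absurd rfl h
      · rintro ⟨h1, h2⟩
        rw [not_not] at h2
        rw [h2, inv_one, mul_one]
        exact h1
    have hssub : {α | s α ≠ 1} \ {α | x α ≠ 1} ⊂ {α | s α ≠ 1} := by
      refine ⟨Set.diff_subset, ?_⟩
      intro hsub
      have hβ₀s : β₀ ∈ {α | s α ≠ 1} := hsupp hxβ₀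
      have := hsub hβ₀s
      exact this.2 hxβ₀
    have hcard : {α | (s * x⁻¹) α ≠ 1}.ncard < {α | s α ≠ 1}.ncard := by
      rw [hsuppt]
      exact Set.ncard_lt_ncard hssub hsfin
    obtain ⟨-, hmin⟩ := rep_spec H hH hsH hs1
    rw [hrep] at hmin
    exact absurd (hmin _ htC) (not_le_of_gt hcard)
  · -- same level: s is in the coset of x
    have hsC : s ∈ C H x := by
      refine ⟨hsH, ?_⟩
      have hfinxs : {α | (x⁻¹ * s) α ≠ 1}.Finite :=
        hH _ (H.mul_mem (H.inv_mem hx) hsH)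
      refine lamW_lt hfinxs (lamW_ne_bot hxfin hx1) ?_
      intro β hβ
      simp only [Pi.mul_apply, Pi.inv_apply] at hβ
      have hxb : x β = 1 := by
        by_contra hxb
        rw [hext β hxb, inv_mul_cancel] at hβ
        exact hβ rfl
      have hsb : s β ≠ 1 := by
        rw [hxb, inv_one, one_mul] at hβ
        exact hβ
      have hle : (β : WithBot τ) ≤ lamW x := by
        rw [heq]; exact le_lamW hsfin hsb
      rw [hβ₀] at hle ⊢
      rcases lt_or_eq_of_le hle with h | h
      · exact h
      · exfalso
        have : β = β₀ := by exact_mod_cast h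
        rw [this] at hxb
        exact hxβ₀ hxb
    have hCeq : C H s = C H x := C_eq_of_mem H hH hx hx1 hsC
    rw [← hrep]
    exact rep_congr H hCeq

end SigmaProdAux




/-- Every subgroup `H` of the σ-product of nontrivial discrete groups (the subgroup of
the Tychonoff product consisting of elements with finite support) has a generating
suitable set: a subset `S ⊆ H`, discrete as a subspace of `H`, with `S ∪ {1}` closed in
`H` and `⟨S⟩ = H`. -/
theorem sigmaProduct_subgroup_has_generating_suitable_set {τ : Type*} (G : τ → Type*)
    [∀ α, Group (G α)] [∀ α, Nontrivial (G α)]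
    [∀ α, TopologicalSpace (G α)] [∀ α, DiscreteTopology (G α)]
    (H : Subgroup (∀ α, G α)) (hH : ∀ h ∈ H, {α | h α ≠ 1}.Finite) :
    ∃ S : Set (∀ α, G α), S ⊆ (H : Set (∀ α, G α)) ∧
      (∀ x ∈ S, ∃ U : Set (∀ α, G α), IsOpen U ∧ U ∩ S = {x}) ∧
      closure (S ∪ {1}) ∩ (H : Set (∀ α, G α)) ⊆ S ∪ {1} ∧
      Subgroup.closure S = H := by
  classical
  obtain ⟨lo, wf⟩ := exists_wellOrder τ
  refine ⟨SigmaProdAux.SS H, SigmaProdAux.SS_subset H, ?_, ?_, SigmaProdAux.closure_SS H hH⟩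
  · -- discreteness
    intro x hx
    obtain ⟨hxH, hx1, hrep⟩ := hx
    have hfin := hH x hxH
    refine ⟨⋂ β ∈ hfin.toFinset, {g : ∀ α, G α | g β = x β}, ?_, ?_⟩
    · refine isOpen_biInter_finset fun β _ => ?_
      exact (isOpen_discrete ({x β} : Set (G β))).preimage (continuous_apply β)
    · ext g
      simp only [Set.mem_inter_iff, Set.mem_iInter, Set.mem_setOf_eq,
        Set.Finite.mem_toFinset, Set.mem_singleton_iff]
      constructor
      · rintro ⟨hgU, hgS⟩
        have := SigmaProdAux.eq_rep_of_extends H hH hxH hx1 hgS hgU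
        rw [this, hrep]
      · rintro rfl
        exact ⟨fun β _ => rfl, hxH, hx1, hrep⟩
  · -- S ∪ {1} is closed in H
    rintro x ⟨hxcl, hxH⟩
    by_contra hxns
    simp only [Set.mem_union, Set.mem_singleton_iff, not_or] at hxns
    obtain ⟨hxS, hx1⟩ := hxns
    have hfin := hH x hxH
    have hTne : ∃ β, x β ≠ 1 := by
      by_contra hc
      push_neg at hc
      exact hx1 (funext fun β => hc β)
    obtain ⟨βx, hβx⟩ := hTne
    set s₀ := SigmaProdAux.rep H x with hs₀def
    have hs₀S : s₀ ∈ SigmaProdAux.SS H := SigmaProdAux.rep_mem_SS H hH hxH hx1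
    have key : ∀ U : Set (∀ α, G α), IsOpen U → x ∈ U →
        (U ∩ (SigmaProdAux.SS H ∪ {1})).Nonempty :=
      fun U hU hxU => (mem_closure_iff.mp hxcl) U hU hxU
    by_cases hext : ∀ β, x β ≠ 1 → s₀ β = x β
    · -- s₀ extends x but s₀ ≠ x; separate using a coordinate where they differ
      have hs₀x : s₀ ≠ x := by
        intro h
        apply hxS
        rw [← h]
        exact hs₀S
      obtain ⟨β₁, hβ₁⟩ := Function.ne_iff.mp hs₀x
      have hxβ₁ : x β₁ = 1 := by
        by_contra hc
        exact hβ₁ (hext β₁ hc)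
      obtain ⟨y, hyU, hyS⟩ := key
        ((⋂ β ∈ hfin.toFinset, {g : ∀ α, G α | g β = x β}) ∩ {g | g β₁ = 1})
        (by
          refine IsOpen.inter (isOpen_biInter_finset fun β _ => ?_) ?_
          · exact (isOpen_discrete ({x β} : Set (G β))).preimage (continuous_apply β)
          · exact (isOpen_discrete ({1} : Set (G β₁))).preimage (continuous_apply β₁))
        (by
          refine ⟨?_, hxβ₁⟩
          simp only [Set.mem_iInter, Set.mem_setOf_eq]
          exact fun β _ => trivial)
      obtain ⟨hyT, hyβ₁⟩ := hyU
      simp only [Set.mem_iInter, Set.mem_setOf_eq, Set.Finite.mem_toFinset] at hyT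
      rcases hyS with hyS | hy1
      · have hyeq : y = s₀ := SigmaProdAux.eq_rep_of_extends H hH hxH hx1 hyS hyT
        rw [hyeq] at hyβ₁
        apply hβ₁
        rw [hyβ₁, hxβ₁]
      · rw [Set.mem_singleton_iff] at hy1
        subst hy1
        exact hβx (hyT βx hβx).symm
    · -- no element of S extends x at all
      obtain ⟨y, hyU, hyS⟩ := key
        (⋂ β ∈ hfin.toFinset, {g : ∀ α, G α | g β = x β})
        (isOpen_biInter_finset fun β _ =>
          (isOpen_discrete ({x β} : Set (G β))).preimage (continuous_apply β))
        (by
          simp only [Set.mem_iInter, Set.mem_setOf_eq]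
          exact fun β _ => trivial)
      simp only [Set.mem_iInter, Set.mem_setOf_eq, Set.Finite.mem_toFinset] at hyU
      rcases hyS with hyS | hy1
      · have hyeq : y = s₀ := SigmaProdAux.eq_rep_of_extends H hH hxH hx1 hyS hyU
        apply hext
        intro β hβ
        rw [← hyeq]
        exact hyU β hβ
      · rw [Set.mem_singleton_iff] at hy1
        subst hy1
        exact hβx (hyU βx hβx).symm
end

section
/- Let {G_α : α < τ} be nontrivial discrete groups and let G be the σ-product of ∏_{α<τ} G_α (tuples with finite support) with the subspace product topology. For a subgroup H of G, define S₁ = {h ∈ H : |supp(h)| = 1} and inductively Sₙ = {h ∈ H : |supp(h)| = n and for every g ∈ S₁ ∪ … ∪ S_{n-1}, supp(g) ⊄ supp(h)}. Then S = ⋃_n Sₙ is a discrete subspace of H. -/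
/-- The support of an element of a product of groups. -/
def suppSet {τ : Type*} {G : τ → Type*} [∀ α, Group (G α)] (g : ∀ α, G α) : Set τ :=
  {α | g α ≠ 1}

/-- The sets `Sₙ`: `Sₙ` consists of the elements `h ∈ H` with `|supp h| = n ≥ 1` such
that no `g` in an earlier `Sₘ` has `supp g ⊆ supp h`. -/
def levelSet {τ : Type*} {G : τ → Type*} [∀ α, Group (G α)] (H : Subgroup (∀ α, G α)) :
    ℕ → Set (∀ α, G α)
  | n => {h | h ∈ H ∧ (suppSet h).Finite ∧ (suppSet h).ncard = n ∧ 1 ≤ n ∧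
      ∀ m, m < n → ∀ g ∈ levelSet H m, ¬ suppSet g ⊆ suppSet h}

/-- The set `S = ⋃ₙ Sₙ` is a discrete subspace of `H`. -/
theorem sigmaProduct_levelSets_discrete {τ : Type*} (G : τ → Type*)
    [∀ α, Group (G α)] [∀ α, Nontrivial (G α)]
    [∀ α, TopologicalSpace (G α)] [∀ α, DiscreteTopology (G α)]
    (H : Subgroup (∀ α, G α)) (hH : ∀ h ∈ H, {α | h α ≠ 1}.Finite) :
    ∀ x ∈ ⋃ n, levelSet H n, ∃ U : Set (∀ α, G α), IsOpen U ∧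
      U ∩ (⋃ n, levelSet H n) = {x} := by
  intro x hx
  obtain ⟨n, hn⟩ := Set.mem_iUnion.mp hx
  have hn' := hn
  rw [levelSet] at hn'
  obtain ⟨hxH, hxfin, hxcard, hn1, hxmin⟩ := hn'
  refine ⟨{g | ∀ α ∈ suppSet x, g α = x α}, ?_, ?_⟩
  · have : {g : ∀ α, G α | ∀ α ∈ suppSet x, g α = x α} =
        ⋂ α ∈ suppSet x, (fun g : ∀ α, G α => g α) ⁻¹' {x α} := by
      ext g; simp
    rw [this]
    exact hxfin.isOpen_biInter fun α _ =>
      (continuous_apply α).isOpen_preimage _ (isOpen_discrete _)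
  · apply subset_antisymm
    · rintro y ⟨hyU, hyS⟩
      obtain ⟨m, hm⟩ := Set.mem_iUnion.mp hyS
      have hm' := hm
      rw [levelSet] at hm'
      obtain ⟨hyH, hyfin, hycard, hm1, hymin⟩ := hm'
      have hsub : suppSet x ⊆ suppSet y := by
        intro α hα
        have := hyU α hα
        simp only [suppSet, Set.mem_setOf_eq] at hα ⊢
        rw [this]; exact hα
      rcases lt_trichotomy n m with h | h | h
      · exact absurd hsub (hymin n h x hn)
      · have heq : suppSet x = suppSet y := by
          apply Set.eq_of_subset_of_ncard_le hsub _ hyfin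
          rw [hxcard, hycard, h]
        have : y = x := by
          funext α
          by_cases hα : α ∈ suppSet x
          · exact hyU α hα
          · have h1 : x α = 1 := by
              by_contra hc; exact hα hc
            have h2 : y α = 1 := by
              by_contra hc
              exact hα (heq ▸ (hc : α ∈ suppSet y))
            rw [h1, h2]
        simp [this]
      · have : n ≤ m := by
          rw [← hxcard, ← hycard]
          exact Set.ncard_le_ncard hsub hyfin
        omega
    · rintro y hy
      rw [Set.mem_singleton_iff] at hy
      subst hy
      exact ⟨fun α _ => rfl, hx⟩
end

section
/- Let G be a separable, non-pseudocompact topological group admitting a closed suitable set. Then s_c(G) ≤ ℵ₀, i.e., G has a countable closed suitable set; in particular d(G) = s_c(G) + ℵ₀. -/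
open Filter Topology

/-- A closed suitable set: closed, discrete as a subspace, generating a dense subgroup. -/
def IsClosedSuitable {G : Type*} [Group G] [TopologicalSpace G] (S : Set G) : Prop :=
  (∀ x ∈ S, ∃ U : Set G, IsOpen U ∧ U ∩ S = {x}) ∧ IsClosed S ∧
    Dense (Subgroup.closure S : Set G)

/-- The density `d(X)`: least cardinality of a dense subset. -/
noncomputable def densityCard (X : Type*) [TopologicalSpace X] : Cardinal :=
  sInf {κ : Cardinal | ∃ D : Set X, Dense D ∧ Cardinal.mk D = κ}

/-- The minimal cardinality `s_c(G)` of a closed suitable set. -/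
noncomputable def scCard (G : Type*) [Group G] [TopologicalSpace G] : Cardinal :=
  sInf {κ : Cardinal | ∃ S : Set G, IsClosedSuitable S ∧ Cardinal.mk S = κ}

/-- A space is pseudocompact if every continuous real-valued function is bounded. -/
def Pseudocompact (X : Type*) [TopologicalSpace X] : Prop :=
  ∀ f : C(X, ℝ), ∃ M : ℝ, ∀ x : X, |f x| ≤ M

/-!
An isolated point of a closed set in an R₀ space is a closed point, so a closed suitable set
makes `G` a T₁ group (it cannot be empty: then `{1}` would be dense and `G` pseudocompact). In a
T₁ space the union of a locally finite family of finite sets is closed and discrete, so it is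
enough to find a countable such family whose union generates a subgroup containing a dense
sequence `dₙ`.

If `G` is precompact, an unbounded continuous function gives a locally finite sequence of
nonempty open sets `Vₙ`, and precompactness gives finite sets `Tₙ` with `Tₙ Vₙ = G`. Writing
each point of `Tₙ₊₁ ∪ {dₙ}` as `t v` with `t ∈ Tₙ`, `v ∈ Vₙ`, the set `T₀` together with all
these factors `v` generates every `Tₙ` and every `dₙ`.

If `G` is not precompact, no finite set of translates of some neighbourhood `W` of `1` covers `G`,
so `yₙ` can be chosen with `yₙ` and `dₙ yₙ` outside `F W`, where `F` consists of the earlier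
points. The pairs `{yₙ, dₙ yₙ}` are then `W`-separated, hence locally finite, and
`dₙ = (dₙ yₙ) yₙ⁻¹`.
-/

open Set
open scoped Pointwise

theorem exists_seq_of_forall_exists_lt {α : Type*} [Nonempty α] (r : ℕ → α → ℕ → α → Prop)
    (h : ∀ n (x : ℕ → α), ∃ y, ∀ m < n, r m (x m) n y) :
    ∃ f : ℕ → α, ∀ m n, m < n → r m (f m) n (f n) := by
  classical
  choose g hg using h
  let f : ℕ → α := Nat.strongRec fun n f => g n fun m => if hm : m < n then f m hm
    else Classical.arbitrary α
  refine ⟨f, fun m n hmn => ?_⟩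
  have hf : f n = g n fun m => if m < n then f m else Classical.arbitrary α := by
    rw [show f n = _ from Nat.strongRec_eq _ n]
    simp only [dite_eq_ite]
    rfl
  simpa [hf, hmn] using hg n (fun m => if m < n then f m else Classical.arbitrary α) m hmn

section Topology

variable {X : Type*} [TopologicalSpace X]

theorem pseudocompact_of_dense_of_finite {D : Set X} (hD : Dense D) (hfin : D.Finite) :
    Pseudocompact X := by
  intro f
  obtain ⟨M, hM⟩ := (hfin.image fun x => |f x|).bddAbove
  exact ⟨M, hD.induction (fun x hx => hM (mem_image_of_mem _ hx))
    (isClosed_le (continuous_abs.comp f.continuous) continuous_const)⟩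

theorem exists_locallyFinite_of_not_pseudocompact (h : ¬ Pseudocompact X) :
    ∃ V : ℕ → Set X, (∀ n, IsOpen (V n) ∧ (V n).Nonempty) ∧ LocallyFinite V := by
  simp only [Pseudocompact, not_forall, not_exists, not_le] at h
  obtain ⟨f, hf⟩ := h
  have hcont : Continuous fun x => |f x| := continuous_abs.comp f.continuous
  refine ⟨fun n => {x | (n : ℝ) < |f x|},
    fun n => ⟨isOpen_lt continuous_const hcont, hf n⟩, fun x => ?_⟩
  refine ⟨{y | |f y| < |f x| + 1}, (isOpen_lt hcont continuous_const).mem_nhds (by simp),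
    (finite_Iio ⌈|f x| + 1⌉₊).subset ?_⟩
  rintro n ⟨y, hny, hy⟩
  exact Nat.lt_ceil.mpr (hny.trans hy)

theorem densityCard_le {D : Set X} (hD : Dense D) : densityCard X ≤ Cardinal.mk D :=
  csInf_le' ⟨D, hD, rfl⟩

theorem densityCard_eq_aleph0 [TopologicalSpace.SeparableSpace X] (h : ¬ Pseudocompact X) :
    densityCard X = Cardinal.aleph0 := by
  obtain ⟨D, hDc, hD⟩ := TopologicalSpace.exists_countable_dense X
  refine le_antisymm ((densityCard_le hD).trans hDc.le_aleph0)
    (le_csInf ⟨_, univ, dense_univ, rfl⟩ ?_)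
  rintro _ ⟨D', hD', rfl⟩
  by_contra hlt
  exact h (pseudocompact_of_dense_of_finite hD'
    (Cardinal.lt_aleph0_iff_set_finite.mp (not_le.mp hlt)))

theorem isClosed_singleton_of_inter_eq_singleton [R0Space X] {S U : Set X} {x : X}
    (hS : IsClosed S) (hU : IsOpen U) (hUS : U ∩ S = {x}) : IsClosed ({x} : Set X) := by
  have hx : x ∈ U ∩ S := hUS ▸ rfl
  refine isClosed_of_closure_subset fun y hy => hUS ▸ ⟨?_, ?_⟩
  · exact (specializes_iff_mem_closure.mpr hy).symm.mem_open hU hx.1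
  · exact hS.closure_subset_iff.mpr (singleton_subset_iff.mpr hx.2) hy

theorem disjoint_nhdsNE_principal_of_finite_inter [T1Space X] {x : X} {U S : Set X}
    (hU : U ∈ 𝓝 x) (hfin : (U ∩ S).Finite) : Disjoint (𝓝[≠] x) (𝓟 S) := by
  rw [disjoint_principal_right]
  filter_upwards [nhdsWithin_le_nhds hU, nhdsNE_le_cofinite x hfin.compl_mem_cofinite]
    with y hyU hy hyS
  exact hy ⟨hyU, hyS⟩

theorem LocallyFinite.isClosed_and_isDiscrete_iUnion [T1Space X] {ι : Type*} {B : ι → Set X}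
    (hB : LocallyFinite B) (hfin : ∀ i, (B i).Finite) :
    IsClosed (⋃ i, B i) ∧ IsDiscrete (⋃ i, B i) := by
  refine isClosed_and_discrete_iff.mpr fun x => ?_
  obtain ⟨U, hU, hUfin⟩ := hB x
  refine disjoint_nhdsNE_principal_of_finite_inter hU
    ((hUfin.biUnion fun i _ => hfin i).subset ?_)
  rintro y ⟨hyU, hyB⟩
  obtain ⟨i, hi⟩ := mem_iUnion.mp hyB
  exact mem_biUnion ⟨y, hi, hyU⟩ hi

end Topology

section Group

variable {G : Type*} [Group G]

theorem exists_seq_inv_mul_notMem {W : Set G} (hW : ∀ F : Set G, F.Finite → ∃ y, y ∉ F * W)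
    (d : ℕ → G) : ∃ y : ℕ → G, ∀ m n, m < n → ∀ p ∈ ({y m, d m * y m} : Set G),
      ∀ q ∈ ({y n, d n * y n} : Set G), p⁻¹ * q ∉ W := by
  refine exists_seq_of_forall_exists_lt (fun m a n b => ∀ p ∈ ({a, d m * a} : Set G),
    ∀ q ∈ ({b, d n * b} : Set G), p⁻¹ * q ∉ W) fun n x => ?_
  set F : Set G := ⋃ m ∈ Iio n, {x m, d m * x m}
  have hF : F.Finite := (finite_Iio n).biUnion fun m _ => (finite_singleton _).insert _
  obtain ⟨y, hy⟩ := hW (F ∪ (d n)⁻¹ • F) (hF.union hF.smul_set)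
  refine ⟨y, fun m hm p hp q hq hpq => hy ?_⟩
  have hpF : p ∈ F := mem_biUnion hm hp
  rcases hq with rfl | rfl
  · exact Set.mem_mul.mpr ⟨p, Or.inl hpF, _, hpq, mul_inv_cancel_left _ _⟩
  · exact Set.mem_mul.mpr ⟨(d n)⁻¹ * p, Or.inr (smul_mem_smul_set hpF), p⁻¹ * (d n * y), hpq,
      by group⟩

variable [TopologicalSpace G]

variable (G) in
def Precompact : Prop :=
  ∀ W ∈ 𝓝 (1 : G), ∃ F : Set G, F.Finite ∧ F * W = univ

theorem scCard_le {S : Set G} (hS : IsClosedSuitable S) : scCard G ≤ Cardinal.mk S :=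
  csInf_le' ⟨S, hS, rfl⟩

theorem IsClosedSuitable.of_locallyFinite [T1Space G] {ι : Type*} {B : ι → Set G}
    (hB : LocallyFinite B) (hfin : ∀ i, (B i).Finite)
    (hdense : Dense (Subgroup.closure (⋃ i, B i) : Set G)) : IsClosedSuitable (⋃ i, B i) :=
  have h := hB.isClosed_and_isDiscrete_iUnion hfin
  ⟨isDiscrete_iff_forall_mem_exists_isOpen.mp h.2, h.1, hdense⟩

theorem exists_countable_isClosedSuitable_of_mul_eq_univ [T1Space G] {d : ℕ → G}
    (hd : DenseRange d) {V T : ℕ → Set G} (hV : LocallyFinite V) (hT : ∀ n, (T n).Finite)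
    (hcover : ∀ n, T n * V n = univ) : ∃ C : Set G, C.Countable ∧ IsClosedSuitable C := by
  choose t ht v hv htv using fun n g => Set.mem_mul.mp ((hcover n).symm ▸ mem_univ g)
  set B : ℕ → Set G := fun n => v n '' (T (n + 1) ∪ {d n})
  set C : Set G := ⋃ o, Option.elim' (T 0) B o
  have hBV : ∀ n, B n ⊆ V n := fun n => image_subset_iff.mpr fun g _ => hv n g
  have hfin : ∀ o, (Option.elim' (T 0) B o).Finite
    | none => hT 0
    | some n => ((hT _).union (finite_singleton _)).image _
  have hBC : ∀ n, B n ⊆ Subgroup.closure C :=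
    fun n => (subset_iUnion (Option.elim' (T 0) B) (some n)).trans Subgroup.subset_closure
  have hTC : ∀ n, T n ⊆ Subgroup.closure C := by
    intro n
    induction n with
    | zero => exact (subset_iUnion (Option.elim' (T 0) B) none).trans Subgroup.subset_closure
    | succ n ih =>
      intro g hg
      rw [← htv n g]
      exact mul_mem (ih (ht n g)) (hBC n (mem_image_of_mem _ (Or.inl hg)))
  refine ⟨C, countable_iUnion fun o => (hfin o).countable,
    .of_locallyFinite ((hV.subset hBV).option_elim' _) hfin (hd.mono ?_)⟩
  rintro _ ⟨n, rfl⟩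
  rw [← htv n (d n)]
  exact mul_mem (hTC n (ht n _)) (hBC n (mem_image_of_mem _ (Or.inr rfl)))

variable [IsTopologicalGroup G]

theorem IsClosedSuitable.t1Space {S : Set G} (hS : IsClosedSuitable S)
    (hG : ¬ Pseudocompact G) : T1Space G := by
  obtain ⟨hdisc, hclosed, hdense⟩ := hS
  obtain ⟨x, hx⟩ : S.Nonempty := by
    refine nonempty_iff_ne_empty.mpr fun hempty => hG (pseudocompact_of_dense_of_finite ?_
      (finite_singleton 1))
    simpa [hempty] using hdense
  obtain ⟨U, hU, hUS⟩ := hdisc x hx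
  refine IsTopologicalGroup.t1Space G ?_
  simpa using isClosedMap_mul_left x⁻¹ _ (isClosed_singleton_of_inter_eq_singleton hclosed hU hUS)

theorem Precompact.exists_finite_mul_eq_univ (hG : Precompact G) {V : Set G} (hV : IsOpen V)
    (hne : V.Nonempty) : ∃ F : Set G, F.Finite ∧ F * V = univ := by
  obtain ⟨v, hv⟩ := hne
  obtain ⟨F, hF, hFW⟩ := hG ((· * v) ⁻¹' V)
    ((continuous_mul_const v).continuousAt.preimage_mem_nhds (by simpa using hV.mem_nhds hv))
  refine ⟨F, hF, eq_univ_of_forall fun g => ?_⟩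
  obtain ⟨t, ht, w, hw, htw⟩ := Set.mem_mul.mp (hFW ▸ mem_univ (g * v⁻¹))
  exact Set.mem_mul.mpr ⟨t, ht, w * v, hw, by rw [← mul_assoc, htw, inv_mul_cancel_right]⟩

theorem exists_countable_isClosedSuitable_of_precompact [T1Space G]
    [TopologicalSpace.SeparableSpace G] (hG : Precompact G) (hnp : ¬ Pseudocompact G) :
    ∃ C : Set G, C.Countable ∧ IsClosedSuitable C := by
  obtain ⟨V, hV, hVlf⟩ := exists_locallyFinite_of_not_pseudocompact hnp
  choose T hT hcover using fun n => hG.exists_finite_mul_eq_univ (hV n).1 (hV n).2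
  exact exists_countable_isClosedSuitable_of_mul_eq_univ
    (TopologicalSpace.denseRange_denseSeq G) hVlf hT hcover

theorem locallyFinite_of_inv_mul_notMem {W : Set G} (hW : W ∈ 𝓝 1) {B : ℕ → Set G}
    (hB : ∀ m n, m < n → ∀ p ∈ B m, ∀ q ∈ B n, p⁻¹ * q ∉ W) : LocallyFinite B := by
  obtain ⟨V, hV, hVW⟩ := exists_nhds_split_inv hW
  intro x
  refine ⟨x • V⁻¹, smul_mem_nhds_self.mpr (inv_mem_nhds_one G hV), Subsingleton.finite ?_⟩
  have hsep : ∀ m n, m < n → (B m ∩ x • V⁻¹).Nonempty → (B n ∩ x • V⁻¹).Nonempty → False := by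
    rintro m n hmn ⟨_, hp, a, ha, rfl⟩ ⟨_, hq, b, hb, rfl⟩
    refine hB m n hmn _ hp _ hq ?_
    simpa [mul_assoc] using hVW _ ha _ hb
  intro m hm n hn
  rcases lt_trichotomy m n with h | h | h
  exacts [(hsep m n h hm hn).elim, h, (hsep n m h hn hm).elim]

theorem exists_countable_isClosedSuitable_of_not_precompact [T1Space G]
    [TopologicalSpace.SeparableSpace G] (hG : ¬ Precompact G) :
    ∃ C : Set G, C.Countable ∧ IsClosedSuitable C := by
  simp only [Precompact, not_forall, not_exists, not_and] at hG
  obtain ⟨W, hW, hcover⟩ := hG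
  set d := TopologicalSpace.denseSeq G
  obtain ⟨y, hy⟩ :=
    exists_seq_inv_mul_notMem (fun F hF => (ne_univ_iff_exists_notMem _).mp (hcover F hF)) d
  set B : ℕ → Set G := fun n => {y n, d n * y n}
  have hfin : ∀ n, (B n).Finite := fun n => (finite_singleton _).insert _
  refine ⟨⋃ n, B n, countable_iUnion fun n => (hfin n).countable,
    .of_locallyFinite (locallyFinite_of_inv_mul_notMem hW hy) hfin
      ((TopologicalSpace.denseRange_denseSeq G).mono ?_)⟩
  rintro _ ⟨n, rfl⟩
  have hB : B n ⊆ Subgroup.closure (⋃ n, B n) := (subset_iUnion B n).trans Subgroup.subset_closure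
  simpa using mul_mem (hB (Or.inr rfl)) (inv_mem (hB (Or.inl rfl)))

theorem exists_countable_isClosedSuitable [T1Space G] [TopologicalSpace.SeparableSpace G]
    (hnp : ¬ Pseudocompact G) : ∃ C : Set G, C.Countable ∧ IsClosedSuitable C := by
  by_cases hG : Precompact G
  exacts [exists_countable_isClosedSuitable_of_precompact hG hnp,
    exists_countable_isClosedSuitable_of_not_precompact hG]

end Group

/-- A separable non-pseudocompact topological group with a closed suitable set has a
countable closed suitable set, i.e. `s_c(G) ≤ ℵ₀`; in particular `d(G) = s_c(G) + ℵ₀`. -/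
theorem separable_nonPseudocompact_scCard_le_aleph0 {G : Type*} [Group G]
    [TopologicalSpace G] [IsTopologicalGroup G] [TopologicalSpace.SeparableSpace G]
    (hnp : ¬ Pseudocompact G) (hS : ∃ S : Set G, IsClosedSuitable S) :
    scCard G ≤ Cardinal.aleph0 ∧ densityCard G = scCard G + Cardinal.aleph0 := by
  obtain ⟨S, hS⟩ := hS
  have := hS.t1Space hnp
  obtain ⟨C, hCc, hC⟩ := exists_countable_isClosedSuitable hnp
  have hsc : scCard G ≤ Cardinal.aleph0 := (scCard_le hC).trans hCc.le_aleph0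
  exact ⟨hsc, by rw [densityCard_eq_aleph0 hnp, Cardinal.add_eq_right le_rfl hsc]⟩
end

section
/- Let X be a non-separable k_ω-space without nontrivial convergent sequences such that the free Abelian topological group A(X) is snf-countable. Then A(X) does not have a suitable set. -/
open Filter Topology

/-- A suitable set: discrete as a subspace, `S ∪ {1}` closed, generating a dense
subgroup. -/
def IsSuitable {G : Type*} [Group G] [TopologicalSpace G] (S : Set G) : Prop :=
  (∀ x ∈ S, ∃ U : Set G, IsOpen U ∧ U ∩ S = {x}) ∧ IsClosed (S ∪ {1}) ∧
    Dense (Subgroup.closure S : Set G)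

/-- `Y` is snf-countable: at every point there is a countable directed family of
sequential neighborhoods forming a network at that point. -/
def SnfCountable (Y : Type*) [TopologicalSpace Y] : Prop :=
  ∃ P : Y → ℕ → Set Y,
    (∀ y n, y ∈ P y n) ∧
    (∀ y n, ∀ u : ℕ → Y, Tendsto u atTop (𝓝 y) → ∀ᶠ k in atTop, u k ∈ P y n) ∧
    (∀ y n m, ∃ k, P y k ⊆ P y n ∩ P y m) ∧
    (∀ y, ∀ U : Set Y, IsOpen U → y ∈ U → ∃ n, P y n ⊆ U)

/-!
`A` is σ-compact, being generated by the σ-compact set `i '' X`. If `S` is a suitable set and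
`C` is compact, then `(S ∪ {1}) ∩ C` is compact with all points but `1` isolated, so every
neighbourhood of `1` contains all but finitely many points of `S ∩ C`. Hence each sequential
neighbourhood `P 1 n` of `1` from the countable sn-network misses only finitely many of them,
and a point of `S ∩ C` lying in all `P 1 n` would be inseparable from `1`, which an isolated
point of an infinite set accumulating only at `1` cannot be. So `S` is countable, and the
supports of its elements form a countable subset `Y` of `X`. It is dense: a continuous real
function on `X` vanishing on `Y` extends to a continuous character of `A` vanishing on the
dense subgroup generated by `S`.
-/

open Set Pointwise

theorem IsCompact.pow {M : Type*} [Monoid M] [TopologicalSpace M] [ContinuousMul M] {K : Set M}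
    (hK : IsCompact K) : ∀ n : ℕ, IsCompact (K ^ n)
  | 0 => by simp
  | n + 1 => by rw [pow_succ]; exact (hK.pow n).mul hK

section Group

variable {G : Type*} [Group G]

theorem Subgroup.exists_finite_of_mem_closure_range {ι : Type*} {f : ι → G} {a : G}
    (ha : a ∈ Subgroup.closure (range f)) :
    ∃ T : Set ι, T.Finite ∧ a ∈ Subgroup.closure (f '' T) := by
  induction ha using Subgroup.closure_induction with
  | mem _ hx =>
    obtain ⟨j, rfl⟩ := hx
    exact ⟨{j}, finite_singleton j, Subgroup.subset_closure (mem_image_of_mem f rfl)⟩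
  | one => exact ⟨∅, finite_empty, one_mem _⟩
  | mul _ _ _ _ hx hy =>
    obtain ⟨T₁, hT₁, h₁⟩ := hx
    obtain ⟨T₂, hT₂, h₂⟩ := hy
    exact ⟨T₁ ∪ T₂, hT₁.union hT₂,
      mul_mem (Subgroup.closure_mono (image_mono subset_union_left) h₁)
        (Subgroup.closure_mono (image_mono subset_union_right) h₂)⟩
  | inv _ _ hx =>
    obtain ⟨T, hT, h⟩ := hx
    exact ⟨T, hT, inv_mem h⟩

theorem Subgroup.exists_countable_subset_closure_image {ι : Type*} {f : ι → G}
    (hgen : Subgroup.closure (range f) = ⊤) {S : Set G} (hS : S.Countable) :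
    ∃ T : Set ι, T.Countable ∧ S ⊆ Subgroup.closure (f '' T) := by
  choose T hT hmem using fun a : G =>
    exists_finite_of_mem_closure_range (hgen ▸ Subgroup.mem_top a : a ∈ Subgroup.closure _)
  refine ⟨⋃ a ∈ S, T a, hS.biUnion fun a _ => (hT a).countable, fun a ha => ?_⟩
  exact Subgroup.closure_mono (image_mono (subset_biUnion_of_mem ha)) (hmem a)

variable [TopologicalSpace G] [IsTopologicalGroup G]

theorem IsSigmaCompact.sigmaCompactSpace_of_closure_eq_top {s : Set G} (hs : IsSigmaCompact s)
    (hgen : Subgroup.closure s = ⊤) : SigmaCompactSpace G := by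
  obtain ⟨K, hK, rfl⟩ := hs
  set M : ℕ → Set G := fun n => {1} ∪ accumulate K n ∪ (accumulate K n)⁻¹
  have hM : ∀ n, IsCompact (M n) := fun n =>
    (isCompact_singleton.union (isCompact_accumulate hK n)).union
      (isCompact_accumulate hK n).inv
  have hM_mono : Monotone M := fun m n hmn =>
    union_subset_union (union_subset_union_right _ (monotone_accumulate hmn))
      (inv_subset_inv.2 (monotone_accumulate hmn))
  have hM_one : ∀ n, (1 : G) ∈ M n := fun n => Or.inl (Or.inl rfl)
  have hcover : ∀ a : G, ∃ n, a ∈ M n ^ n := by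
    intro a
    induction (hgen ▸ Subgroup.mem_top a : a ∈ Subgroup.closure _)
      using Subgroup.closure_induction'' with
    | mem x hx =>
      obtain ⟨n, hn⟩ := mem_iUnion.1 hx
      refine ⟨n + 1, pow_subset_pow (hM_mono n.le_succ) (hM_one _) n.succ_pos ?_⟩
      rw [pow_one]
      exact Or.inl (Or.inr (subset_accumulate hn))
    | inv_mem x hx =>
      obtain ⟨n, hn⟩ := mem_iUnion.1 hx
      refine ⟨n + 1, pow_subset_pow (hM_mono n.le_succ) (hM_one _) n.succ_pos ?_⟩
      rw [pow_one]
      exact Or.inr (inv_mem_inv.2 (subset_accumulate hn))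
    | one => exact ⟨0, by simp⟩
    | mul x y _ _ hx hy =>
      obtain ⟨m, hm⟩ := hx
      obtain ⟨n, hn⟩ := hy
      refine ⟨m + n, pow_add (M (m + n)) m n ▸ mul_mem_mul ?_ ?_⟩
      · exact pow_subset_pow_left (hM_mono (m.le_add_right n)) hm
      · exact pow_subset_pow_left (hM_mono (n.le_add_left m)) hn
  exact ⟨⟨fun n => M n ^ n, fun n => (hM n).pow n,
    iUnion_eq_univ_iff.2 hcover⟩⟩

end Group

section SnNetwork

variable {Y : Type*} [TopologicalSpace Y] {e : Y} {S D : Set Y}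

theorem IsDiscrete.finite_inter_diff_of_isClosed_union_singleton (hS : IsDiscrete S)
    (hSe : IsClosed (S ∪ {e})) {C : Set Y} (hC : IsCompact C) {V : Set Y} (hV : V ∈ 𝓝 e) :
    ((S ∩ C) \ V).Finite := by
  obtain ⟨W, hWV, hW, heW⟩ := mem_nhds_iff.1 hV
  have hcompact : IsCompact (C ∩ ((S ∪ {e}) ∩ Wᶜ)) :=
    hC.inter_right (hSe.inter hW.isClosed_compl)
  refine (hcompact.finite (hS.mono ?_)).subset ?_
  · rintro x ⟨-, hxS | rfl, hxW⟩
    exacts [hxS, absurd heW hxW]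
  · rintro x ⟨⟨hxS, hxC⟩, hxV⟩
    exact ⟨hxC, Or.inl hxS, fun hxW => hxV (hWV hxW)⟩

theorem finite_diff_of_forall_tendsto_eventually_mem {N : Set Y}
    (hD : ∀ V ∈ 𝓝 e, (D \ V).Finite)
    (hN : ∀ u : ℕ → Y, Tendsto u atTop (𝓝 e) → ∀ᶠ k in atTop, u k ∈ N) :
    (D \ N).Finite := by
  by_contra hinf
  set u : ℕ ↪ ↥(D \ N) := Set.Infinite.natEmbedding _ hinf
  have hu : Tendsto (fun k => (u k : Y)) atTop (𝓝 e) := by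
    intro V hV
    rw [← Nat.cofinite_eq_atTop, mem_map, mem_cofinite]
    refine ((hD V hV).preimage ?_).subset fun k hk => ⟨(u k).2.1, hk⟩
    exact (Subtype.val_injective.comp u.injective).injOn
  obtain ⟨k, hk⟩ := (hN _ hu).exists
  exact (u k).2.2 hk

theorem IsDiscrete.finite_of_specializes [R0Space Y] (hD : IsDiscrete D)
    (hconv : ∀ V ∈ 𝓝 e, (D \ V).Finite) {d : Y} (hd : d ∈ D) (hde : d ⤳ e) : D.Finite := by
  obtain ⟨U, hU, hUD⟩ := isDiscrete_iff_forall_mem_exists_isOpen.1 hD d hd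
  have hdU : d ∈ U := (hUD.ge rfl).1
  have heU : e ∈ U := hde.symm.mem_open hU hdU
  refine ((hconv U (hU.mem_nhds heU)).union (finite_singleton d)).subset fun x hx => ?_
  by_cases hxU : x ∈ U
  · exact Or.inr (hUD.le ⟨hxU, hx⟩)
  · exact Or.inl ⟨hx, hxU⟩

-- `hseq` and `hnet` say that `P` is a countable sn-network at `e`.
theorem IsDiscrete.countable_of_forall_finite_diff [R0Space Y] (hD : IsDiscrete D)
    (hconv : ∀ V ∈ 𝓝 e, (D \ V).Finite) {P : ℕ → Set Y}
    (hseq : ∀ n, ∀ u : ℕ → Y, Tendsto u atTop (𝓝 e) → ∀ᶠ k in atTop, u k ∈ P n)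
    (hnet : ∀ U : Set Y, IsOpen U → e ∈ U → ∃ n, P n ⊆ U) : D.Countable := by
  by_cases h : ∃ d ∈ D, ∀ n, d ∈ P n
  · obtain ⟨d, hd, hdP⟩ := h
    have hde : d ⤳ e := specializes_iff_forall_open.2 fun U hU heU =>
      let ⟨n, hn⟩ := hnet U hU heU
      hn (hdP n)
    exact (hD.finite_of_specializes hconv hd hde).countable
  · push Not at h
    refine (countable_iUnion fun n =>
      (finite_diff_of_forall_tendsto_eventually_mem hconv (hseq n)).countable).mono ?_
    intro d hd
    obtain ⟨n, hn⟩ := h d hd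
    exact mem_iUnion.2 ⟨n, hd, hn⟩

theorem IsDiscrete.countable_of_isClosed_union_singleton [R0Space Y] [SigmaCompactSpace Y]
    (hS : IsDiscrete S) (hSe : IsClosed (S ∪ {e})) {P : ℕ → Set Y}
    (hseq : ∀ n, ∀ u : ℕ → Y, Tendsto u atTop (𝓝 e) → ∀ᶠ k in atTop, u k ∈ P n)
    (hnet : ∀ U : Set Y, IsOpen U → e ∈ U → ∃ n, P n ⊆ U) : S.Countable := by
  rw [← inter_univ S, ← iUnion_compactCovering Y, inter_iUnion]
  exact countable_iUnion fun n => (hS.mono inter_subset_left).countable_of_forall_finite_diff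
    (fun V hV => hS.finite_inter_diff_of_isClosed_union_singleton hSe
      (isCompact_compactCovering Y n) hV) hseq hnet

end SnNetwork

theorem IsTopologicalGroup.completelyRegularSpace (G : Type*) [TopologicalSpace G] [Group G]
    [IsTopologicalGroup G] : CompletelyRegularSpace G :=
  let := IsTopologicalGroup.rightUniformSpace G
  inferInstance

theorem dense_of_dense_subgroupClosure_image {X : Type u} [TopologicalSpace X]
    [CompletelyRegularSpace X] {A : Type*} [Group A] [TopologicalSpace A] {i : X → A}
    (hext : ∀ f : X → Multiplicative (ULift.{u} ℝ), Continuous f →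
      ∃ F : A →* Multiplicative (ULift.{u} ℝ), Continuous F ∧ ∀ x, F (i x) = f x)
    {Y : Set X} (hY : Dense (Subgroup.closure (i '' Y) : Set A)) : Dense Y := by
  refine dense_iff_closure_eq.2 (eq_univ_of_forall fun x₀ => ?_)
  by_contra hx₀
  obtain ⟨g, hg, hgx₀, hgY⟩ :=
    CompletelyRegularSpace.completely_regular x₀ _ isClosed_closure hx₀
  obtain ⟨F, hF, hFi⟩ := hext (fun x => Multiplicative.ofAdd (ULift.up (1 - (g x : ℝ))))
    (by fun_prop)
  have hF_one : F = 1 := by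
    refine MonoidHom.ext (congrFun (hF.ext_on hY continuous_const fun a ha => ?_))
    refine (Subgroup.closure_le F.ker).2 ?_ ha
    rintro _ ⟨y, hy, rfl⟩
    simp only [SetLike.mem_coe, MonoidHom.mem_ker, hFi, hgY (subset_closure hy), Pi.one_apply,
      Set.Icc.coe_one, sub_self]
    rfl
  have := congrArg (fun z => (Multiplicative.toAdd z).down) (hFi x₀)
  simp [hF_one, hgx₀] at this

theorem freeAbelianTopGroup_no_suitable_set_general {X : Type u} [TopologicalSpace X]
    (hnsep : ¬ TopologicalSpace.SeparableSpace X)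
    (hkω : ∃ K : ℕ → Set X, (∀ n, IsCompact (K n)) ∧ (⋃ n, K n) = Set.univ ∧
      ∀ C : Set X, (∀ n, IsClosed ((fun x : K n => (x : X)) ⁻¹' C)) → IsClosed C)
    {A : Type u} [CommGroup A] [TopologicalSpace A] [IsTopologicalGroup A]
    (i : X → A) (hemb : Topology.IsEmbedding i)
    (hgen : Subgroup.closure (Set.range i) = ⊤)
    (huniv : ∀ (K : Type u) [CommGroup K] [TopologicalSpace K] [IsTopologicalGroup K]
      (f : X → K), Continuous f → ∃ F : A →* K, Continuous F ∧ ∀ x, F (i x) = f x)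
    (hsnf : SnfCountable A) :
    ¬ ∃ S : Set A, IsSuitable S := by
  rintro ⟨S, hS_discrete, hS_closed, hS_dense⟩
  obtain ⟨K, hK, hK_cover, -⟩ := hkω
  obtain ⟨P, -, hseq, -, hnet⟩ := hsnf
  have : SigmaCompactSpace X := ⟨⟨K, hK, hK_cover⟩⟩
  have : SigmaCompactSpace A :=
    (isSigmaCompact_univ.image hemb.continuous).sigmaCompactSpace_of_closure_eq_top
      (by rwa [image_univ])
  have hS_countable : S.Countable :=
    (isDiscrete_iff_forall_mem_exists_isOpen.2 hS_discrete).countable_of_isClosed_union_singleton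
      hS_closed (hseq 1) (hnet 1)
  obtain ⟨Y, hY, hSY⟩ := Subgroup.exists_countable_subset_closure_image hgen hS_countable
  have := IsTopologicalGroup.completelyRegularSpace A
  have := hemb.isInducing.completelyRegularSpace
  exact hnsep ⟨⟨Y, hY, dense_of_dense_subgroupClosure_image (fun f hf => huniv _ f hf)
    (hS_dense.mono ((Subgroup.closure_le _).2 hSY))⟩⟩

/-- Let `X` be a non-separable `k_ω`-space without nontrivial convergent sequences and
let `A` be the free Abelian topological group over `X` (given by the universal property
for Abelian topological groups). If `A` is snf-countable, then `A` has no suitable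
set. -/
theorem freeAbelianTopGroup_no_suitable_set {X : Type u} [TopologicalSpace X]
    (hnsep : ¬ TopologicalSpace.SeparableSpace X)
    (hkω : ∃ K : ℕ → Set X, (∀ n, IsCompact (K n)) ∧ (⋃ n, K n) = Set.univ ∧
      ∀ C : Set X, (∀ n, IsClosed ((fun x : K n => (x : X)) ⁻¹' C)) → IsClosed C)
    (hnoconv : ∀ (u : ℕ → X) (x : X), Tendsto u atTop (𝓝 x) → ∀ᶠ n in atTop, u n = x)
    {A : Type u} [CommGroup A] [TopologicalSpace A] [IsTopologicalGroup A]
    (i : X → A) (hemb : Topology.IsEmbedding i)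
    (hgen : Subgroup.closure (Set.range i) = ⊤)
    (huniv : ∀ (K : Type u) [CommGroup K] [TopologicalSpace K] [IsTopologicalGroup K]
      (f : X → K), Continuous f → ∃ F : A →* K, Continuous F ∧ ∀ x, F (i x) = f x)
    (hsnf : SnfCountable A) :
    ¬ ∃ S : Set A, IsSuitable S :=
  freeAbelianTopGroup_no_suitable_set_general hnsep hkω i hemb hgen huniv hsnf
end

section
/- Let G be a hereditarily collectionwise Hausdorff topological group with a suitable set S, and let H be a transfinite sequentially dense subgroup of G (every point of G is the unique accumulation point of some subset of H). Then H has a suitable set; and if S is closed in G, H has a closed suitable set. -/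
open Filter Topology

/-- A space is collectionwise Hausdorff if every closed discrete subset can be separated
by a discrete family of open neighborhoods. -/
def CollectionwiseHausdorff (X : Type*) [TopologicalSpace X] : Prop :=
  ∀ S : Set X, IsClosed S → (∀ x ∈ S, ∃ U : Set X, IsOpen U ∧ U ∩ S = {x}) →
    ∃ U : X → Set X, (∀ x ∈ S, IsOpen (U x) ∧ x ∈ U x) ∧
      ∀ y : X, ∃ V : Set X, IsOpen V ∧ y ∈ V ∧ {x ∈ S | (V ∩ U x).Nonempty}.Subsingleton

/-!
Remove `1` from `S`: the rest `S'` is closed and discrete in the subspace `Y = G \ (cl S' \ S')`,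
which misses at most `1`, so `S'` is separated in `Y` by a discrete family of open sets `U x`.
Keep the points of `S' ∩ H` and replace every other `x ∈ S'` by `D x ∩ U x ∩ Y`, where `D x ⊆ H`
has `x` as its unique accumulation point. Each piece is discrete (its only accumulation point `x`
is not in `H`), so the union `T` of this discrete family is discrete; an accumulation point of `T`
in `H ∩ Y` is one of a single piece, hence lies in `cl S' ∩ H ∩ Y ⊆ S' ∩ H ⊆ T`; and `S` lies in
the closure of `T ∪ {1} ⊆ ⟨T⟩`, so the density of `⟨S⟩` passes to `⟨T⟩`. If `S` is closed, so is
`S'`, and then `Y = G`.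
-/

section Replacement

open Set

variable {X : Type*} [TopologicalSpace X]

def DiscreteFamilyOn (Y S : Set X) (U : X → Set X) : Prop :=
  ∀ y ∈ Y, ∃ V ∈ 𝓝 y, {x ∈ S | (V ∩ U x).Nonempty}.Subsingleton

namespace DiscreteFamilyOn

variable {Y S : Set X} {U E : X → Set X}

lemma mono (hU : DiscreteFamilyOn Y S U) (hE : ∀ x ∈ S, E x ⊆ U x) :
    DiscreteFamilyOn Y S E := by
  intro y hy
  obtain ⟨V, hV, hsub⟩ := hU y hy
  refine ⟨V, hV, fun x hx x' hx' => hsub ⟨hx.1, ?_⟩ ⟨hx'.1, ?_⟩⟩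
  · exact hx.2.mono (inter_subset_inter_right V (hE x hx.1))
  · exact hx'.2.mono (inter_subset_inter_right V (hE x' hx'.1))

lemma exists_nhds_inter_biUnion_subset (hE : DiscreteFamilyOn Y S E) {y : X} (hy : y ∈ Y) :
    ∃ V ∈ 𝓝 y, ∀ x ∈ S, (V ∩ E x).Nonempty → V ∩ ⋃ x' ∈ S, E x' ⊆ E x := by
  obtain ⟨V, hV, hsub⟩ := hE y hy
  refine ⟨V, hV, fun x hx hVx t ⟨htV, htE⟩ => ?_⟩
  obtain ⟨x', hx', htx'⟩ := mem_iUnion₂.mp htE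
  obtain rfl : x' = x := hsub ⟨hx', t, htV, htx'⟩ ⟨hx, hVx⟩
  exact htx'

lemma exists_accPt_of_accPt_biUnion (hE : DiscreteFamilyOn Y S E) {y : X} (hy : y ∈ Y)
    (hacc : AccPt y (𝓟 (⋃ x ∈ S, E x))) : ∃ x ∈ S, AccPt y (𝓟 (E x)) := by
  obtain ⟨V, hV, hsub⟩ := hE.exists_nhds_inter_biUnion_subset hy
  have haccV : AccPt y (𝓟 (V ∩ ⋃ x ∈ S, E x)) := hacc.nhds_inter hV
  obtain ⟨t, ⟨-, htV, htE⟩, -⟩ := accPt_iff_nhds.mp haccV univ univ_mem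
  obtain ⟨x, hx, htx⟩ := mem_iUnion₂.mp htE
  exact ⟨x, hx, haccV.mono (principal_mono.mpr (hsub x hx ⟨t, htV, htx⟩))⟩

lemma isDiscrete_biUnion (hE : DiscreteFamilyOn Y S E) (hEY : ∀ x ∈ S, E x ⊆ Y)
    (hdisc : ∀ x ∈ S, IsDiscrete (E x)) : IsDiscrete (⋃ x ∈ S, E x) := by
  refine .of_nhdsWithin fun y hy => ?_
  obtain ⟨x, hx, hyx⟩ := mem_iUnion₂.mp hy
  obtain ⟨V, hV, hsub⟩ := hE.exists_nhds_inter_biUnion_subset (hEY x hx hyx)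
  calc 𝓝[⋃ x ∈ S, E x] y = 𝓝[V ∩ ⋃ x ∈ S, E x] y := by
        rw [nhdsWithin_restrict' _ hV, inter_comm]
    _ ≤ 𝓝[E x] y := nhdsWithin_mono y (hsub x hx ⟨y, mem_of_mem_nhds hV, hyx⟩)
    _ = pure y := (hdisc x hx).nhdsWithin y hyx

lemma closure_biUnion_inter_subset {H : Set X} (hE : DiscreteFamilyOn Y S E)
    (hSc : closure S ∩ Y ⊆ S) (hself : ∀ x ∈ S, x ∈ H → x ∈ E x)
    (hacc : ∀ x ∈ S, ∀ g ∈ H, AccPt g (𝓟 (E x)) → g ∈ closure {x}) :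
    closure (⋃ x ∈ S, E x) ∩ H ∩ Y ⊆ ⋃ x ∈ S, E x := by
  rintro g ⟨⟨hg, hgH⟩, hgY⟩
  rw [closure_eq_self_union_derivedSet] at hg
  rcases hg with hg | hg
  · exact hg
  obtain ⟨x, hx, hgx⟩ := hE.exists_accPt_of_accPt_biUnion hgY hg
  have hgS : g ∈ S :=
    hSc ⟨closure_mono (singleton_subset_iff.mpr hx) (hacc x hx g hgH hgx), hgY⟩
  exact mem_biUnion hgS (hself g hgS hgH)

end DiscreteFamilyOn

lemma isDiscrete_of_accPt_unique {D : Set X} {x : X} (hD : ∀ y, AccPt y (𝓟 D) → y = x)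
    (hx : x ∉ D) : IsDiscrete D :=
  isDiscrete_iff_discreteTopology.mpr <|
    discreteTopology_of_noAccPts fun y hy hacc => hx (hD y hacc ▸ hy)

lemma CollectionwiseHausdorff.exists_discreteFamilyOn {Y S : Set X}
    (hY : CollectionwiseHausdorff Y) (hSY : S ⊆ Y) (hSc : closure S ∩ Y ⊆ S)
    (hS : IsDiscrete S) :
    ∃ U : X → Set X, (∀ x ∈ S, IsOpen (U x) ∧ x ∈ U x) ∧
      DiscreteFamilyOn Y S (fun x => U x ∩ Y) := by
  have hSY_closed : IsClosed (Subtype.val ⁻¹' S : Set Y) :=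
    isClosed_induced_iff.mpr ⟨closure S, isClosed_closure,
      Subset.antisymm (fun y hy => hSc ⟨hy, y.2⟩) fun y hy => subset_closure hy⟩
  have hSY_disc : IsDiscrete (Subtype.val ⁻¹' S : Set Y) :=
    hS.preimage continuous_subtype_val.continuousOn Subtype.val_injective
  obtain ⟨W, hW, hWdisc⟩ :=
    hY _ hSY_closed (isDiscrete_iff_forall_mem_exists_isOpen.mp hSY_disc)
  have hU : ∀ x (hx : x ∈ S), ∃ U : Set X, IsOpen U ∧ Subtype.val ⁻¹' U = W ⟨x, hSY hx⟩ :=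
    fun x hx => isOpen_induced_iff.mp (hW ⟨x, hSY hx⟩ hx).1
  choose! U hUopen hUW using hU
  refine ⟨U, fun x hx => ⟨hUopen x hx, ?_⟩, fun y hy => ?_⟩
  · simpa [← hUW x hx] using (hW ⟨x, hSY hx⟩ hx).2
  obtain ⟨V', hV'open, hyV', hV'sub⟩ := hWdisc ⟨y, hy⟩
  obtain ⟨V, hVopen, rfl⟩ := isOpen_induced_iff.mp hV'open
  refine ⟨V, hVopen.mem_nhds hyV', fun x hx x' hx' => ?_⟩
  have key : ∀ x (hx : x ∈ {x ∈ S | (V ∩ (U x ∩ Y)).Nonempty}),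
      (⟨x, hSY hx.1⟩ : Y) ∈ {z : Y | z.1 ∈ S ∧ (Subtype.val ⁻¹' V ∩ W z).Nonempty} := by
    rintro x ⟨hxS, t, htV, htU, htY⟩
    exact ⟨hxS, ⟨t, htY⟩, htV, hUW x hxS ▸ htU⟩
  exact congrArg Subtype.val (hV'sub (key x hx) (key x' hx'))

lemma CollectionwiseHausdorff.exists_discreteFamilyOn_replacing {Y S H : Set X} {D : X → Set X}
    (hY : CollectionwiseHausdorff Y) (hSY : S ⊆ Y) (hSc : closure S ∩ Y ⊆ S)
    (hS : IsDiscrete S) (hDH : ∀ x ∈ S, D x ⊆ H) (hDacc : ∀ x ∈ S, AccPt x (𝓟 (D x)))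
    (hDuniq : ∀ x ∈ S, ∀ y, AccPt y (𝓟 (D x)) → y = x) :
    ∃ E : X → Set X, DiscreteFamilyOn Y S E ∧ ∀ x ∈ S, E x ⊆ H ∩ Y ∧ IsDiscrete (E x) ∧
      (x ∈ H → x ∈ E x) ∧ x ∈ closure (E x ∪ Yᶜ) ∧
      ∀ g ∈ H, AccPt g (𝓟 (E x)) → g ∈ closure {x} := by
  classical
  obtain ⟨U, hU, hUdisc⟩ := hY.exists_discreteFamilyOn hSY hSc hS
  refine ⟨fun x => if x ∈ H then {x} else D x ∩ U x ∩ Y, hUdisc.mono fun x hx => ?_,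
    fun x hx => ?_⟩
  · split_ifs
    · exact singleton_subset_iff.mpr ⟨(hU x hx).2, hSY hx⟩
    · exact fun z hz => ⟨hz.1.2, hz.2⟩
  by_cases hxH : x ∈ H
  · simp only [if_pos hxH]
    exact ⟨singleton_subset_iff.mpr ⟨hxH, hSY hx⟩, subsingleton_singleton.isDiscrete,
      fun _ => rfl, subset_closure (Or.inl rfl),
      fun g _ hg => mem_closure_iff_clusterPt.mpr hg.clusterPt⟩
  simp only [if_neg hxH]
  have hED : D x ∩ U x ∩ Y ⊆ D x := inter_subset_left.trans inter_subset_left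
  refine ⟨fun z hz => ⟨hDH x hx (hED hz), hz.2⟩,
    (isDiscrete_of_accPt_unique (hDuniq x hx) fun h => hxH (hDH x hx h)).mono hED,
    fun h => absurd h hxH, ?_,
    fun g hgH hg => absurd (hDuniq x hx g (hg.mono (principal_mono.mpr hED)) ▸ hgH) hxH⟩
  have hxUD : x ∈ closure (U x ∩ D x) := (hU x hx).1.inter_closure
    ⟨(hU x hx).2, mem_closure_iff_clusterPt.mpr (hDacc x hx).clusterPt⟩
  refine closure_mono ?_ hxUD
  rintro z ⟨hzU, hzD⟩
  by_cases hzY : z ∈ Y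
  · exact Or.inl ⟨⟨hzD, hzU⟩, hzY⟩
  · exact Or.inr hzY

lemma CollectionwiseHausdorff.exists_isDiscrete_replacement {Y S H : Set X} {D : X → Set X}
    (hY : CollectionwiseHausdorff Y) (hSY : S ⊆ Y) (hSc : closure S ∩ Y ⊆ S)
    (hS : IsDiscrete S) (hDH : ∀ x ∈ S, D x ⊆ H) (hDacc : ∀ x ∈ S, AccPt x (𝓟 (D x)))
    (hDuniq : ∀ x ∈ S, ∀ y, AccPt y (𝓟 (D x)) → y = x) :
    ∃ T ⊆ H, IsDiscrete T ∧ closure T ∩ H ∩ Y ⊆ T ∧ S ∩ H ⊆ T ∧ S ⊆ closure (T ∪ Yᶜ) := by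
  obtain ⟨E, hE, hEx⟩ := hY.exists_discreteFamilyOn_replacing hSY hSc hS hDH hDacc hDuniq
  choose hEHY hEdisc hself hclosure hacc using hEx
  have hSH : S ∩ H ⊆ ⋃ x ∈ S, E x := fun x ⟨hx, hxH⟩ => mem_biUnion hx (hself x hx hxH)
  refine ⟨⋃ x ∈ S, E x, iUnion₂_subset fun x hx => (hEHY x hx).trans inter_subset_left,
    hE.isDiscrete_biUnion (fun x hx => (hEHY x hx).trans inter_subset_right) hEdisc,
    hE.closure_biUnion_inter_subset hSc hself hacc, hSH,
    fun x hx => closure_mono ?_ (hclosure x hx)⟩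
  exact union_subset_union_left _ (subset_biUnion_of_mem hx)

lemma exists_isDiscrete_replacement_of_hereditarily_collectionwiseHausdorff
    {S H : Set X} {a : X} (hX : ∀ Y : Set X, CollectionwiseHausdorff Y) (hS : IsDiscrete S)
    (hSa : IsClosed (S ∪ {a}))
    (hH : ∀ x, ∃ D ⊆ H, AccPt x (𝓟 D) ∧ ∀ y, AccPt y (𝓟 D) → y = x) :
    ∃ T ⊆ H, IsDiscrete T ∧ closure (T ∪ {a}) ∩ H ⊆ T ∪ {a} ∧ S ⊆ closure (T ∪ {a}) ∧
      (IsClosed S → closure T ∩ H ⊆ T) := by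
  choose D hDH hDacc hDuniq using hH
  set S' := S \ {a}
  have hS'cl : closure S' ⊆ S ∪ {a} := closure_minimal (sdiff_subset.trans subset_union_left) hSa
  -- `(closure S' \ S')ᶜ` is the largest subspace in which `S'` is closed; it misses at most `a`.
  obtain ⟨T, hTH, hTdisc, hTcl, hS'H, hS'T⟩ :=
    (hX (closure S' \ S')ᶜ).exists_isDiscrete_replacement
    (fun x hx h => h.2 hx) (fun x ⟨hx, hxY⟩ => by_contra fun h => hxY ⟨hx, h⟩)
    (hS.mono sdiff_subset) (fun x _ => hDH x) (fun x _ => hDacc x) (fun x _ => hDuniq x)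
  have hYc : closure S' \ S' ⊆ {a} := by
    rintro x ⟨hxcl, hxS'⟩
    rcases hS'cl hxcl with hx | hx
    · exact by_contra fun hxa => hxS' ⟨hx, hxa⟩
    · exact hx
  refine ⟨T, hTH, hTdisc, ?_, fun x hx => ?_, fun hSc => ?_⟩
  · rintro g ⟨hg, hgH⟩
    by_cases hga : g = a
    · exact Or.inr hga
    rw [closure_union] at hg
    rcases hg with hg | hg
    · exact Or.inl (hTcl ⟨⟨hg, hgH⟩, fun h => hga (hYc h)⟩)
    · rcases closure_minimal subset_union_right hSa hg with hgS | hgS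
      · exact Or.inl (hS'H ⟨⟨hgS, hga⟩, hgH⟩)
      · exact absurd hgS hga
  · by_cases hxa : x = a
    · exact subset_closure (Or.inr hxa)
    · exact closure_mono (union_subset_union_right T ((compl_compl _).subset.trans hYc))
        (hS'T ⟨hx, hxa⟩)
  · have hS'closed : IsClosed S' := isClosed_of_subset_discrete_closed sdiff_subset hS hSc
    exact fun g ⟨hg, hgH⟩ => hTcl ⟨⟨hg, hgH⟩, fun h => h.2 (hS'closed.closure_subset h.1)⟩

end Replacement

lemma dense_subgroupClosure_of_subset_closure {G : Type*} [Group G] [TopologicalSpace G]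
    [IsTopologicalGroup G] {S T : Set G} (hST : S ⊆ closure (Subgroup.closure T : Set G))
    (hS : Dense (Subgroup.closure S : Set G)) : Dense (Subgroup.closure T : Set G) := by
  have hle : Subgroup.closure S ≤ (Subgroup.closure T).topologicalClosure := by
    rwa [Subgroup.closure_le, Subgroup.topologicalClosure_coe]
  exact dense_closure.mp (hS.mono (SetLike.coe_subset_coe.mpr hle))

/-- Let `G` be a hereditarily collectionwise Hausdorff topological group with a suitable
set `S`, and let `H` be a transfinite sequentially dense subgroup of `G` (every point of
`G` is the unique accumulation point of some subset of `H`). Then `H` has a suitable set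
`T`; moreover if `S` is closed in `G` then `T` is closed in `H`. -/
theorem transfiniteSequentiallyDense_subgroup_suitable {G : Type*} [Group G]
    [TopologicalSpace G] [IsTopologicalGroup G]
    (hcwH : ∀ Y : Set G, CollectionwiseHausdorff Y)
    (S : Set G) (hSdisc : ∀ x ∈ S, ∃ U : Set G, IsOpen U ∧ U ∩ S = {x})
    (hSclosed : IsClosed (S ∪ {1}))
    (hSdense : Dense (Subgroup.closure S : Set G))
    (H : Subgroup G)
    (htsd : ∀ x : G, ∃ D : Set G, D ⊆ (H : Set G) ∧ AccPt x (𝓟 D) ∧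
      ∀ y : G, AccPt y (𝓟 D) → y = x) :
    ∃ T : Set G, T ⊆ (H : Set G) ∧
      (∀ x ∈ T, ∃ U : Set G, IsOpen U ∧ U ∩ T = {x}) ∧
      closure (T ∪ {1}) ∩ (H : Set G) ⊆ T ∪ {1} ∧
      (H : Set G) ⊆ closure (Subgroup.closure T : Set G) ∧
      (IsClosed S → closure T ∩ (H : Set G) ⊆ T) := by
  obtain ⟨T, hTH, hTdisc, hTcl, hST, hTclosed⟩ :=
    exists_isDiscrete_replacement_of_hereditarily_collectionwiseHausdorff hcwH
      (isDiscrete_iff_forall_mem_exists_isOpen.mpr hSdisc) hSclosed htsd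
  have hTone : T ∪ {1} ⊆ Subgroup.closure T :=
    Set.union_subset Subgroup.subset_closure (Set.singleton_subset_iff.mpr (one_mem _))
  have hdense : Dense (Subgroup.closure T : Set G) :=
    dense_subgroupClosure_of_subset_closure (hST.trans (closure_mono hTone)) hSdense
  exact ⟨T, hTH, isDiscrete_iff_forall_mem_exists_isOpen.mp hTdisc, hTcl,
    fun h _ => hdense.closure_eq ▸ Set.mem_univ h, hTclosed⟩
end
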